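/- arXiv:2106.15824 — 4 statements merged into one kernel-verified Lean document; each statement's English description precedes it below -/
import Mathlib

section
/- Let k, m, n be positive integers with k > n > m and n = k − 1, let b be a nonzero real number and let c be a real number. Then the set of zeros of q is finite and contains at most k² points. -/
open Polynomial Matrix Finset

namespace Stmt4B
set_option linter.unusedSectionVars false
set_option maxHeartbeats 1000000

/-- non-uniform coefficient-of-product lemma -/
lemma coeff_prod_of_le {ι : Type*} (s : Finset ι) (f : ι → Polynomial ℂ) (d : ι → ℕ)
    (h : ∀ i ∈ s, (f i).natDegree ≤ d i) :
    (∏ i ∈ s, f i).coeff (∑ i ∈ s, d i) = ∏ i ∈ s, (f i).coeff (d i) := by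
  induction s using Finset.cons_induction with
  | empty => simp
  | cons a s ha ih =>
    rw [Finset.prod_cons, Finset.sum_cons,
      Polynomial.coeff_mul_add_eq_of_natDegree_le (h a (Finset.mem_cons_self a s))
        ((Polynomial.natDegree_prod_le s f).trans
          (Finset.sum_le_sum fun i hi => h i (Finset.mem_cons_of_mem hi))),
      ih fun i hi => h i (Finset.mem_cons_of_mem hi), Finset.prod_cons]

lemma coeff_X_pow_mul' (p : Polynomial (Polynomial ℂ)) (s t : ℕ) :
    (X ^ s * p).coeff t = if s ≤ t then p.coeff (t - s) else 0 := by
  rw [mul_comm, Polynomial.coeff_mul_X_pow']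

variable (k m n : ℕ) (b c : ℝ)

noncomputable def Ap : Polynomial (Polynomial ℂ) :=
  X ^ n + C (C (c : ℂ)) * X ^ m + C (C (b : ℂ) * X ^ k + X)

noncomputable def Bp : Polynomial (Polynomial ℂ) :=
  C (C (b : ℂ)) * X ^ k + X + C (X ^ n + C (c : ℂ) * X ^ m)

noncomputable def Q (i : ℕ) : Polynomial (Polynomial ℂ) :=
  if i < k then X ^ (k - 1 - i) * Ap k m n b c else X ^ (n - 1 - (i - k)) * Bp k m n b c

noncomputable def M : Matrix (Fin (n + k)) (Fin (n + k)) (Polynomial ℂ) :=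
  fun i j => (Q k m n b c i.val).coeff (n + k - 1 - j.val)

/-- the matrix of top coefficients -/
noncomputable def M' : Matrix (Fin (n + k)) (Fin (n + k)) ℂ :=
  fun r c' => ((M k m n b c r c').coeff (if n ≤ c'.val then k else 0))

lemma natDegree_A0_le (hk : 1 ≤ k) : (C (b : ℂ) * X ^ k + X).natDegree ≤ k := by
  refine (natDegree_add_le _ _).trans (max_le ?_ ?_)
  · exact (natDegree_C_mul_le _ _).trans (by simp)
  · rw [natDegree_X]; omega

lemma natDegree_B0_le (hmn : m < n) (hnk : n < k) :
    (X ^ n + C (c : ℂ) * X ^ m : Polynomial ℂ).natDegree ≤ k := by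
  refine (natDegree_add_le _ _).trans (max_le ?_ ?_)
  · simp; omega
  · exact (natDegree_C_mul_le _ _).trans (by simp; omega)

def tau (hnk : n < k) : Equiv.Perm (Fin (n + k)) where
  toFun c := ⟨if n ≤ c.val then c.val - n else k + c.val, by
    rcases c with ⟨v, hv⟩; dsimp only; split_ifs <;> omega⟩
  invFun r := ⟨if r.val < k then r.val + n else r.val - k, by
    rcases r with ⟨v, hv⟩; dsimp only; split_ifs <;> omega⟩
  left_inv c := by
    rcases c with ⟨v, hv⟩
    apply Fin.ext
    dsimp only
    split_ifs <;> omega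
  right_inv r := by
    rcases r with ⟨v, hv⟩
    apply Fin.ext
    dsimp only
    split_ifs <;> omega

variable (hm : 0 < m) (hmn : m < n) (hnk : n < k)

section
include hm hmn hnk

lemma coeff_Ap (d : ℕ) : (Ap k m n b c).coeff d =
    if d = n then 1 else if d = m then C (c : ℂ)
      else if d = 0 then C (b : ℂ) * X ^ k + X else 0 := by
  simp only [Ap, coeff_add, coeff_C_mul, coeff_X_pow, coeff_C]
  split_ifs <;> first | (exfalso; omega) | ring

lemma coeff_Bp (d : ℕ) : (Bp k m n b c).coeff d =
    if d = k then C (b : ℂ) else if d = 1 then 1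
      else if d = 0 then X ^ n + C (c : ℂ) * X ^ m else 0 := by
  simp only [Bp, coeff_add, coeff_C_mul, coeff_X_pow, coeff_C, coeff_X]
  split_ifs <;> first | (exfalso; omega) | ring

lemma natDegree_Ap_le : (Ap k m n b c).natDegree ≤ n := by
  unfold Ap
  refine (natDegree_add_le _ _).trans (max_le ((natDegree_add_le _ _).trans (max_le ?_ ?_)) ?_)
  · simp
  · exact (natDegree_C_mul_le _ _).trans (by simp only [natDegree_X_pow]; omega)
  · rw [natDegree_C]; omega

lemma natDegree_Bp_le : (Bp k m n b c).natDegree ≤ k := by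
  unfold Bp
  refine (natDegree_add_le _ _).trans (max_le ((natDegree_add_le _ _).trans (max_le ?_ ?_)) ?_)
  · exact (natDegree_C_mul_le _ _).trans (by simp)
  · rw [natDegree_X]; omega
  · rw [natDegree_C]; omega

lemma natDegree_Q_le (i : ℕ) :
    (Q k m n b c i).natDegree ≤ n + k - 1 := by
  unfold Q
  split_ifs with h
  · exact natDegree_mul_le.trans (by
      have := natDegree_Ap_le k m n b c hm hmn hnk
      simp only [natDegree_X_pow]; omega)
  · exact natDegree_mul_le.trans (by
      have := natDegree_Bp_le k m n b c hm hmn hnk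
      simp only [natDegree_X_pow]; omega)

lemma entry_natDegree (r c' : Fin (n + k)) :
    (M k m n b c r c').natDegree ≤ if n ≤ c'.val then k else 0 := by
  have hA0 := natDegree_A0_le k b (by omega)
  have hB0 := natDegree_B0_le k m n c hmn hnk
  have hc' := c'.isLt
  unfold M Q
  split_ifs with h1 h2 <;>
    first
    | (rw [coeff_X_pow_mul', coeff_Ap k m n b c hm hmn hnk]
       split_ifs <;> simp_all [natDegree_C] <;> omega)
    | (rw [coeff_X_pow_mul', coeff_Bp k m n b c hm hmn hnk]
       split_ifs <;> simp_all [natDegree_C] <;> omega)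

lemma colBound_sum : ∑ c' : Fin (n + k), (if n ≤ c'.val then k else 0) = k * k := by
  rw [Fin.sum_univ_eq_sum_range (fun c' => if n ≤ c' then k else 0) (n + k),
    Finset.range_eq_Ico, ← Finset.sum_Ico_consecutive _ (Nat.zero_le n) (Nat.le_add_right n k)]
  have h1 : ∑ x ∈ Finset.Ico 0 n, (if n ≤ x then k else 0) = 0 :=
    Finset.sum_eq_zero fun x hx => by
      simp only [Finset.mem_Ico] at hx
      rw [if_neg (show ¬ n ≤ x by omega)]
  have h2 : ∑ x ∈ Finset.Ico n (n + k), (if n ≤ x then k else 0) = k * k := by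
    rw [Finset.sum_congr rfl (fun x hx => by
      simp only [Finset.mem_Ico] at hx; exact if_pos (by omega)),
      Finset.sum_const, Nat.card_Ico, smul_eq_mul, Nat.add_sub_cancel_left]
  omega

lemma natDegree_detM_le : ((M k m n b c).det).natDegree ≤ k * k := by
  rw [Matrix.det_apply']
  refine natDegree_sum_le_of_forall_le _ _ fun σ _ => ?_
  refine (natDegree_mul_le).trans ?_
  rw [show ((Equiv.Perm.sign σ : ℤ) : Polynomial ℂ).natDegree = 0 from natDegree_intCast _]
  rw [zero_add, ← colBound_sum k m n hm hmn hnk]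
  exact (natDegree_prod_le univ _).trans
    (Finset.sum_le_sum fun c' _ => entry_natDegree k m n b c hm hmn hnk (σ c') c')

lemma coeff_detM : ((M k m n b c).det).coeff (k * k) = (M' k m n b c).det := by
  rw [Matrix.det_apply', Matrix.det_apply', finset_sum_coeff]
  refine Finset.sum_congr rfl fun σ _ => ?_
  rw [show ((Equiv.Perm.sign σ : ℤ) : Polynomial ℂ) = C ((Equiv.Perm.sign σ : ℤ) : ℂ) from
      (C_eq_intCast _).symm, coeff_C_mul, ← colBound_sum k m n hm hmn hnk,
    coeff_prod_of_le univ _ _ fun c' _ => entry_natDegree k m n b c hm hmn hnk (σ c') c']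
  simp [M']

lemma Mhigh (r c' : Fin (n + k)) (hc : n ≤ c'.val) :
    (M k m n b c r c').coeff k = if r.val + n = c'.val then (b : ℂ) else 0 := by
  have hr := r.isLt
  have hc' := c'.isLt
  rcases lt_or_ge r.val k with h1 | h1
  · have hM : M k m n b c r c' =
        (X ^ (k - 1 - r.val) * Ap k m n b c).coeff (n + k - 1 - c'.val) := by
      unfold M Q; rw [if_pos h1]
    rw [hM, coeff_X_pow_mul', coeff_Ap k m n b c hm hmn hnk]
    split_ifs <;>
      simp only [coeff_one, coeff_C, coeff_add, coeff_C_mul, coeff_X_pow, coeff_X,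
        coeff_zero] <;>
      (try (exfalso; omega)) <;>
      (try split_ifs) <;>
      (try (exfalso; omega)) <;>
      first | ring | rfl
  · have hM : M k m n b c r c' =
        (X ^ (n - 1 - (r.val - k)) * Bp k m n b c).coeff (n + k - 1 - c'.val) := by
      unfold M Q; rw [if_neg (by omega)]
    rw [hM, coeff_X_pow_mul', coeff_Bp k m n b c hm hmn hnk]
    rw [if_neg (show ¬ (r.val + n = c'.val) by omega)]
    split_ifs <;>
      simp only [coeff_one, coeff_C, coeff_add, coeff_C_mul, coeff_X_pow, coeff_X,
        coeff_zero] <;>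
      (try (exfalso; omega)) <;>
      (try split_ifs) <;>
      (try (exfalso; omega)) <;>
      first | ring | rfl

lemma Mlow (r c' : Fin (n + k)) (hr : k ≤ r.val) (hc : c'.val < n) :
    (M k m n b c r c').coeff 0 = if r.val - k = c'.val then (b : ℂ) else 0 := by
  have hrlt := r.isLt
  have hc' := c'.isLt
  have hM : M k m n b c r c' =
      (X ^ (n - 1 - (r.val - k)) * Bp k m n b c).coeff (n + k - 1 - c'.val) := by
    unfold M Q; rw [if_neg (by omega)]
  rw [hM, coeff_X_pow_mul', coeff_Bp k m n b c hm hmn hnk]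
  split_ifs <;>
    simp only [coeff_one, coeff_C, coeff_add, coeff_C_mul, coeff_X_pow, coeff_X,
      coeff_zero] <;>
    (try (exfalso; omega)) <;>
    (try split_ifs) <;>
    (try (exfalso; omega)) <;>
    first | ring | rfl

lemma Ddiag (r : Fin (n + k)) :
    M' k m n b c (tau k n hnk r) r = (b : ℂ) := by
  have htau : (tau k n hnk r).val = if n ≤ r.val then r.val - n else k + r.val := rfl
  have hr := r.isLt
  unfold M'
  by_cases h : n ≤ r.val
  · rw [if_pos h, Mhigh k m n b c hm hmn hnk _ r h, htau, if_pos h,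
      if_pos (show r.val - n + n = r.val by omega)]
  · rw [if_neg h, Mlow k m n b c hm hmn hnk _ r (by rw [htau, if_neg h]; omega) (by omega),
      htau, if_neg h, if_pos (show k + r.val - k = r.val by omega)]

lemma Dupper (r c' : Fin (n + k)) (hrc : r < c') :
    M' k m n b c (tau k n hnk r) c' = 0 := by
  have htau : (tau k n hnk r).val = if n ≤ r.val then r.val - n else k + r.val := rfl
  have hr := r.isLt
  have hc' := c'.isLt
  have hrc' : r.val < c'.val := hrc
  unfold M'
  by_cases h : n ≤ c'.val
  · rw [if_pos h, Mhigh k m n b c hm hmn hnk _ c' h, htau]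
    split_ifs with h1 h2 <;> first | (exfalso; omega) | rfl
  · have h2 : ¬ n ≤ r.val := by omega
    rw [if_neg h, Mlow k m n b c hm hmn hnk _ c' (by rw [htau, if_neg h2]; omega) (by omega),
      htau, if_neg h2, if_neg (show ¬ (k + r.val - k = c'.val) by omega)]

lemma detM'_ne_zero (hb : b ≠ 0) : (M' k m n b c).det ≠ 0 := by
  have hperm := Matrix.det_permute (tau k n hnk) (M' k m n b c)
  have htri : ((M' k m n b c).submatrix (tau k n hnk) id).BlockTriangular OrderDual.toDual := by
    intro i j hij
    exact Dupper k m n b c hm hmn hnk i j hij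
  have hdet : ((M' k m n b c).submatrix (tau k n hnk) id).det = (b : ℂ) ^ (n + k) := by
    rw [Matrix.det_of_lowerTriangular _ htri]
    rw [Finset.prod_congr rfl (fun i _ => by
      show M' k m n b c (tau k n hnk i) i = (b : ℂ)
      exact Ddiag k m n b c hm hmn hnk i)]
    simp
  intro h0
  rw [h0, mul_zero] at hperm
  rw [hperm] at hdet
  exact pow_ne_zero (n + k) (Complex.ofReal_ne_zero.mpr hb) hdet.symm

lemma eval_Ap (z w : ℂ)
    (hA : (b : ℂ) * z ^ k + w ^ n + (c : ℂ) * w ^ m + z = 0) :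
    eval w ((Ap k m n b c).map (evalRingHom z)) = 0 := by
  rw [eval_map]
  simp only [Ap, eval₂_add, eval₂_mul, eval₂_X_pow, eval₂_C, coe_evalRingHom, eval_C,
    eval_add, eval_mul, eval_pow, eval_X]
  linear_combination hA

lemma eval_Bp (z w : ℂ)
    (hB : (b : ℂ) * w ^ k + z ^ n + (c : ℂ) * z ^ m + w = 0) :
    eval w ((Bp k m n b c).map (evalRingHom z)) = 0 := by
  rw [eval_map]
  simp only [Bp, eval₂_add, eval₂_mul, eval₂_X_pow, eval₂_C, eval₂_X, coe_evalRingHom, eval_C,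
    eval_add, eval_mul, eval_pow, eval_X]
  linear_combination hB

lemma eval_Q (z w : ℂ) (i : ℕ)
    (hA : (b : ℂ) * z ^ k + w ^ n + (c : ℂ) * w ^ m + z = 0)
    (hB : (b : ℂ) * w ^ k + z ^ n + (c : ℂ) * z ^ m + w = 0) :
    eval w ((Q k m n b c i).map (evalRingHom z)) = 0 := by
  unfold Q
  split_ifs with h
  · rw [Polynomial.map_mul, Polynomial.map_pow, map_X, eval_mul,
      eval_Ap k m n b c hm hmn hnk z w hA, mul_zero]
  · rw [Polynomial.map_mul, Polynomial.map_pow, map_X, eval_mul,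
      eval_Bp k m n b c hm hmn hnk z w hB, mul_zero]

lemma eval_detM (z w : ℂ)
    (hA : (b : ℂ) * z ^ k + w ^ n + (c : ℂ) * w ^ m + z = 0)
    (hB : (b : ℂ) * w ^ k + z ^ n + (c : ℂ) * z ^ m + w = 0) :
    eval z ((M k m n b c).det) = 0 := by
  have hdet := RingHom.map_det (evalRingHom z) (M k m n b c)
  rw [show eval z ((M k m n b c).det) = (evalRingHom z) ((M k m n b c).det) from rfl, hdet]
  apply Matrix.exists_mulVec_eq_zero_iff.mp
  refine ⟨fun c' => w ^ (n + k - 1 - c'.val), ?_, ?_⟩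
  · intro hv0
    have h1 := congrFun hv0 ⟨n + k - 1, by omega⟩
    simp only [Nat.sub_self, pow_zero, Pi.zero_apply] at h1
    exact one_ne_zero h1
  · funext r
    set P := (Q k m n b c r.val).map (evalRingHom z) with hP
    have hentry : ∀ j : Fin (n + k),
        ((M k m n b c).map (evalRingHom z)) r j = P.coeff (n + k - 1 - j.val) := by
      intro j
      rw [hP, coeff_map]
      rfl
    show (∑ j, ((M k m n b c).map (evalRingHom z)) r j * w ^ (n + k - 1 - j.val)) = 0
    rw [Finset.sum_congr rfl fun j _ => by rw [hentry j]]
    have hstep : (∑ j : Fin (n + k), P.coeff (n + k - 1 - j.val) * w ^ (n + k - 1 - j.val))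
        = ∑ t ∈ Finset.range (n + k), P.coeff t * w ^ t := by
      rw [Fin.sum_univ_eq_sum_range (fun t => P.coeff (n + k - 1 - t) * w ^ (n + k - 1 - t))
        (n + k)]
      exact Finset.sum_range_reflect (fun t => P.coeff t * w ^ t) (n + k)
    rw [hstep]
    have hdeg : P.natDegree < n + k := by
      have h1 : P.natDegree ≤ (Q k m n b c r.val).natDegree := natDegree_map_le
      have h2 := natDegree_Q_le k m n b c hm hmn hnk r.val
      omega
    rw [← eval_eq_sum_range' hdeg w]
    exact eval_Q k m n b c hm hmn hnk z w r.val hA hB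

end
end Stmt4B
/-- For `b ≠ 0` and `n = k - 1`, the harmonic quadrinomial
`q(z) = b z^k + conj(z)^n + c conj(z)^m + z` has at most `k²` zeros. -/
theorem stmt_4 (k m n : ℕ) (hm : 0 < m) (hmn : m < n) (hnk : n < k) (hnk1 : n = k - 1)
    (b c : ℝ) (hb : b ≠ 0) :
    {z : ℂ | (b : ℂ) * z ^ k + ((starRingEnd ℂ) z) ^ n + (c : ℂ) * ((starRingEnd ℂ) z) ^ m + z = 0}.Finite ∧
    {z : ℂ | (b : ℂ) * z ^ k + ((starRingEnd ℂ) z) ^ n + (c : ℂ) * ((starRingEnd ℂ) z) ^ m + z = 0}.ncard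
      ≤ k ^ 2 := by
  set S := {z : ℂ | (b : ℂ) * z ^ k + ((starRingEnd ℂ) z) ^ n + (c : ℂ) * ((starRingEnd ℂ) z) ^ m + z = 0} with hS
  set R := (Stmt4B.M k m n b c).det with hR
  have hRne : R ≠ 0 := by
    intro h0
    have h1 := Stmt4B.coeff_detM k m n b c hm hmn hnk
    rw [← hR, h0, Polynomial.coeff_zero] at h1
    exact Stmt4B.detM'_ne_zero k m n b c hm hmn hnk hb h1.symm
  have hdeg : R.natDegree ≤ k * k := Stmt4B.natDegree_detM_le k m n b c hm hmn hnk
  have hsub : S ⊆ {z : ℂ | R.IsRoot z} := by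
    intro z hz
    simp only [hS, Set.mem_setOf_eq] at hz
    have hA : (b : ℂ) * z ^ k + ((starRingEnd ℂ) z) ^ n + (c : ℂ) * ((starRingEnd ℂ) z) ^ m
        + z = 0 := hz
    have hB : (b : ℂ) * ((starRingEnd ℂ) z) ^ k + z ^ n + (c : ℂ) * z ^ m
        + (starRingEnd ℂ) z = 0 := by
      have h2 := congrArg (starRingEnd ℂ) hA
      simpa [map_add, _root_.map_mul, map_pow, Complex.conj_conj, Complex.conj_ofReal] using h2
    exact Stmt4B.eval_detM k m n b c hm hmn hnk z ((starRingEnd ℂ) z) hA hB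
  have hfinroot : {z : ℂ | R.IsRoot z}.Finite := Polynomial.finite_setOf_isRoot hRne
  refine ⟨hfinroot.subset hsub, ?_⟩
  have h1 : S.ncard ≤ {z : ℂ | R.IsRoot z}.ncard := Set.ncard_le_ncard hsub hfinroot
  have h2 : {z : ℂ | R.IsRoot z} = ↑(R.roots.toFinset) := by
    ext x
    simp [Multiset.mem_toFinset, Polynomial.mem_roots', hRne]
  rw [h2, Set.ncard_coe_finset] at h1
  have h3 : R.roots.toFinset.card ≤ Multiset.card R.roots := R.roots.toFinset_card_le
  have h4 : Multiset.card R.roots ≤ R.natDegree := Polynomial.card_roots' R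
  have h5 : k * k = k ^ 2 := (sq k).symm
  omega
end

section
/- Let k ≥ 2 be an integer, set n = k and m = 1, and let b, c be real numbers with b ≠ 1 and b ≠ −1. Let z ∈ ℂ be such that z^k·conj(z) is purely imaginary, i.e., Re(z^k·conj(z)) = 0. Then |k·z^(k−1) + c| = |b·k·z^(k−1) + 1| (that is, the dilatation ω(z) = (k·z^(k−1) + c)/(b·k·z^(k−1) + 1) of q has unit modulus) if and only if |z|^(2k−2) = (c² − 1)/(k²·(b² − 1)), i.e., |z| = (1/k)^(1/(k−1))·((c² − 1)/(b² − 1))^(1/(2k−2)). -/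
/-- For `n = k > m = 1`, `b ≠ ±1`, and `z^k conj(z)` purely imaginary, the dilatation of
`q(z) = b z^k + conj(z)^k + c conj(z) + z` has unit modulus iff
`|z|^(2k-2) = (c² - 1)/(k²(b² - 1))`. -/
theorem stmt_8 (k : ℕ) (hk : 2 ≤ k) (b c : ℝ) (hb1 : b ≠ 1) (hb1' : b ≠ -1)
    (z : ℂ) (him : (z ^ k * (starRingEnd ℂ) z).re = 0) :
    ‖(k : ℂ) * z ^ (k - 1) + (c : ℂ)‖ = ‖(b : ℂ) * (k : ℂ) * z ^ (k - 1) + 1‖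
      ↔ ‖z‖ ^ (2 * k - 2) = (c ^ 2 - 1) / ((k : ℝ) ^ 2 * (b ^ 2 - 1)) := by
  have hk1 : k - 1 + 1 = k := by omega
  set w := z ^ (k - 1) with hw
  have ha : w.re = 0 := by
    by_cases hz : z = 0
    · simp [hw, hz, zero_pow (show k - 1 ≠ 0 by omega)]
    · have h1 : z ^ k * (starRingEnd ℂ) z = w * (Complex.normSq z : ℝ) := by
        have hzk : z ^ k = w * z := by rw [hw, ← pow_succ, hk1]
        rw [hzk, mul_assoc, Complex.mul_conj]
      rw [h1] at him
      have h2 : w.re * Complex.normSq z = 0 := by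
        simpa [Complex.mul_re] using him
      exact (mul_eq_zero.1 h2).resolve_right fun h => hz (Complex.normSq_eq_zero.1 h)
  have hs : w.im ^ 2 = ‖z‖ ^ (2 * k - 2) := by
    have h1 : Complex.normSq w = w.re ^ 2 + w.im ^ 2 := by
      rw [Complex.normSq_apply]; ring
    have h2 : Complex.normSq w = ‖z‖ ^ (2 * k - 2) := by
      rw [← Complex.sq_norm, hw, norm_pow, ← pow_mul]
      congr 1; omega
    rw [h1, ha] at h2
    nlinarith [h2]
  rw [← hs]
  rw [Complex.norm_def, Complex.norm_def,
    Real.sqrt_inj (Complex.normSq_nonneg _) (Complex.normSq_nonneg _)]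
  have e1 : Complex.normSq ((k : ℂ) * w + (c : ℂ)) = c ^ 2 + (k : ℝ) ^ 2 * w.im ^ 2 := by
    simp [Complex.normSq_apply, Complex.add_re, Complex.add_im, Complex.mul_re,
      Complex.mul_im, ha]
    ring
  have e2 : Complex.normSq ((b : ℂ) * (k : ℂ) * w + 1) = 1 + b ^ 2 * (k : ℝ) ^ 2 * w.im ^ 2 := by
    simp [Complex.normSq_apply, Complex.add_re, Complex.add_im, Complex.mul_re,
      Complex.mul_im, ha]
    ring
  rw [e1, e2]
  have hk0 : (k : ℝ) ≠ 0 := by positivity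
  have hb2 : b ^ 2 - 1 ≠ 0 := by
    intro h
    have h' : (b - 1) * (b + 1) = 0 := by nlinarith
    rcases mul_eq_zero.1 h' with h'' | h''
    · exact hb1 (by linarith)
    · exact hb1' (by linarith)
  rw [eq_div_iff (mul_ne_zero (pow_ne_zero 2 hk0) hb2)]
  constructor <;> intro h <;> linear_combination -h
end

section
/- Let k ≥ 2 be an integer and let M > 0 be a real number with M ≠ 1/k. Then the real polynomial x^(k+1) − (1 + M)·x^k + M has exactly two distinct positive real roots, one of which is x = 1 (a root of multiplicity one). -/
open Polynomial Finset

/-- For `k ≥ 2` and `M > 0` with `M ≠ 1/k`, the polynomial `x^(k+1) - (1+M)x^k + M`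
has exactly two distinct positive real roots, one of which is `x = 1`,
a root of multiplicity one. -/
theorem stmt_11 (k : ℕ) (hk : 2 ≤ k) (M : ℝ) (hM : 0 < M) (hMk : M ≠ 1 / k) :
    ∃ δ : ℝ, 0 < δ ∧ δ ≠ 1 ∧
      {x : ℝ | 0 < x ∧ (X ^ (k + 1) - C (1 + M) * X ^ k + C M).eval x = 0} = {1, δ} ∧
      (X ^ (k + 1) - C (1 + M) * X ^ k + C M).rootMultiplicity 1 = 1 := by
  have hk0 : k ≠ 0 := by omega
  have hkR : (0:ℝ) < k := by positivity
  have hMk1 : M * k ≠ 1 := by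
    intro h
    apply hMk
    field_simp
    linarith [h]
  set g : ℝ → ℝ := fun x => x ^ k - M * ∑ i ∈ range k, x ^ i with hgdef
  -- key monotonicity-type lemma
  have key : ∀ a b : ℝ, 0 < a → a < b → g a = 0 → 0 < g b := by
    intro a b ha hab hga
    have hb0 : 0 < b := ha.trans hab
    have hak : a ^ k = M * ∑ i ∈ range k, a ^ i := by
      have := hga
      simp only [hgdef] at this
      linarith
    have hbk : b ^ k = M * ∑ i ∈ range k, (b / a) ^ k * a ^ i := by
      rw [← Finset.mul_sum, ← mul_assoc, mul_comm M, mul_assoc, ← hak,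
        div_pow, div_mul_cancel₀]
      positivity
    have hterm : ∀ i ∈ range k, b ^ i < (b / a) ^ k * a ^ i := by
      intro i hi
      rw [Finset.mem_range] at hi
      have h1 : a ^ (k - i) < b ^ (k - i) := by
        apply pow_lt_pow_left₀ hab ha.le
        omega
      have h2 : b ^ i * a ^ k < b ^ k * a ^ i := by
        have e1 : a ^ k = a ^ i * a ^ (k - i) := by rw [← pow_add]; congr 1; omega
        have e2 : b ^ k = b ^ i * b ^ (k - i) := by rw [← pow_add]; congr 1; omega
        rw [e1, e2]
        have hpos : 0 < b ^ i * a ^ i := by positivity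
        calc b ^ i * (a ^ i * a ^ (k - i)) = (b ^ i * a ^ i) * a ^ (k - i) := by ring
          _ < (b ^ i * a ^ i) * b ^ (k - i) := by
              exact mul_lt_mul_of_pos_left h1 hpos
          _ = b ^ i * b ^ (k - i) * a ^ i := by ring
      rw [div_pow, div_mul_eq_mul_div, lt_div_iff₀ (by positivity)]
      linarith [h2]
    have hsum : ∑ i ∈ range k, b ^ i < ∑ i ∈ range k, (b / a) ^ k * a ^ i := by
      apply Finset.sum_lt_sum_of_nonempty
      · exact Finset.nonempty_range_iff.mpr hk0
      · exact hterm
    simp only [hgdef]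
    have : M * ∑ i ∈ range k, b ^ i < M * ∑ i ∈ range k, (b / a) ^ k * a ^ i :=
      mul_lt_mul_of_pos_left hsum hM
    rw [hbk]
    linarith
  -- value of g at 0
  have hg0 : g 0 = -M := by
    simp only [hgdef]
    rw [geom_sum_eq (by norm_num : (0:ℝ) ≠ 1)]
    simp [zero_pow hk0]
  -- value of g at 1
  have hg1 : g 1 = 1 - M * k := by
    simp only [hgdef]
    simp [Finset.sum_const, Finset.card_range]
  have hg1ne : g 1 ≠ 0 := by
    rw [hg1]; intro h; apply hMk1; linarith
  -- g is continuous
  have hgc : Continuous g := by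
    simp only [hgdef]
    exact (continuous_pow k).sub (continuous_const.mul
      (continuous_finset_sum _ fun i _ => continuous_pow i))
  -- g is positive at N
  set N : ℝ := max 1 (M * k + 1) with hNdef
  have hN1 : (1:ℝ) ≤ N := le_max_left _ _
  have hNMk : M * k < N := lt_of_lt_of_le (by linarith) (le_max_right _ _)
  have hgN : 0 < g N := by
    have hsum : ∑ i ∈ range k, N ^ i ≤ k * N ^ (k - 1) := by
      calc ∑ i ∈ range k, N ^ i ≤ ∑ _i ∈ range k, N ^ (k - 1) := by
            apply Finset.sum_le_sum
            intro i hi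
            rw [Finset.mem_range] at hi
            exact pow_le_pow_right₀ hN1 (by omega)
        _ = k * N ^ (k - 1) := by rw [Finset.sum_const, Finset.card_range]; ring
    have hNk : N ^ k = N ^ (k - 1) * N := by rw [← pow_succ]; congr 1; omega
    have hNp : (0:ℝ) < N ^ (k - 1) := by positivity
    simp only [hgdef]
    have : M * ∑ i ∈ range k, N ^ i ≤ M * (k * N ^ (k - 1)) :=
      mul_le_mul_of_nonneg_left hsum hM.le
    have h2 : N ^ (k - 1) * (M * k) < N ^ (k - 1) * N := mul_lt_mul_of_pos_left hNMk hNp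
    rw [hNk]
    nlinarith
  -- existence of δ via IVT
  have h0N : (0:ℝ) ≤ N := by linarith
  obtain ⟨δ, hδmem, hgδ⟩ : ∃ δ ∈ Set.Ioo (0:ℝ) N, g δ = 0 := by
    have hsub := intermediate_value_Ioo h0N hgc.continuousOn
    have h0mem : (0:ℝ) ∈ Set.Ioo (g 0) (g N) := by
      rw [hg0]; constructor <;> [linarith; exact hgN]
    obtain ⟨δ, hδ, hδeq⟩ := hsub h0mem
    exact ⟨δ, hδ, hδeq⟩
  have hδpos : 0 < δ := hδmem.1
  have hδne1 : δ ≠ 1 := fun h => hg1ne (h ▸ hgδ)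
  -- uniqueness of g's positive root
  have huniq : ∀ x : ℝ, 0 < x → g x = 0 → x = δ := by
    intro x hx hgx
    rcases lt_trichotomy x δ with h | h | h
    · exact absurd hgδ (by have := key x δ hx h hgx; linarith)
    · exact h
    · exact absurd hgx (by have := key δ x hδpos h hgδ; linarith)
  -- factorization identity on ℝ
  have hid : ∀ x : ℝ, x ^ (k + 1) - (1 + M) * x ^ k + M = (x - 1) * g x := by
    intro x
    simp only [hgdef]
    linear_combination M * geom_sum_mul x k
  -- eval form
  have heval : ∀ x : ℝ, (X ^ (k + 1) - C (1 + M) * X ^ k + C M).eval x =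
      x ^ (k + 1) - (1 + M) * x ^ k + M := by
    intro x; simp
  refine ⟨δ, hδpos, hδne1, ?_, ?_⟩
  · ext x
    simp only [Set.mem_setOf_eq, Set.mem_insert_iff, Set.mem_singleton_iff]
    constructor
    · rintro ⟨hx, hroot⟩
      rw [heval, hid] at hroot
      rcases mul_eq_zero.mp hroot with h | h
      · left; linarith
      · right; exact huniq x hx h
    · rintro (h | h)
      · subst h
        refine ⟨one_pos, ?_⟩
        rw [heval, hid]; ring
      · subst h
        refine ⟨hδpos, ?_⟩
        rw [heval, hid, hgδ]; ring
  · -- multiplicity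
    have hfactP : (X ^ (k + 1) - C (1 + M) * X ^ k + C M : ℝ[X]) =
        (X - C 1) * (X ^ k - C M * ∑ i ∈ range k, X ^ i) := by
      rw [C_add, C_1]
      linear_combination (C M : ℝ[X]) * geom_sum_mul (X : ℝ[X]) k
    set G : ℝ[X] := X ^ k - C M * ∑ i ∈ range k, X ^ i with hGdef
    have hGeval : G.eval 1 = 1 - M * k := by
      simp [hGdef, eval_finset_sum]
    have hGne : G ≠ 0 := by
      intro h
      rw [h] at hGeval
      simp at hGeval
      apply hMk1; linarith
    have hGnr : ¬ G.IsRoot 1 := by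
      rw [IsRoot, hGeval]
      intro h; apply hMk1; linarith
    rw [hfactP, rootMultiplicity_mul (mul_ne_zero (X_sub_C_ne_zero 1) hGne)]
    rw [rootMultiplicity_X_sub_C_self, rootMultiplicity_eq_zero hGnr]
end

section
/- Let h and g be complex polynomials with deg h = n > deg g. Then the complex-valued harmonic polynomial f(z) = h(z) + conj(g(z)) has at most n² zeros: the set { z ∈ ℂ : f(z) = 0 } is finite and contains at most n² points. -/
open Polynomial Matrix

noncomputable section

namespace Wilm

/-- Upper bound for polynomial evaluation. -/
lemma norm_eval_le (p : ℂ[X]) (d : ℕ) (hd : p.natDegree ≤ d) (w : ℂ) :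
    ‖p.eval w‖ ≤ (∑ i ∈ Finset.range (d + 1), ‖p.coeff i‖) * max 1 ‖w‖ ^ d := by
  rw [eval_eq_sum_range' (Nat.lt_succ_of_le hd) w, Finset.sum_mul]
  refine (norm_sum_le _ _).trans (Finset.sum_le_sum fun i hi => ?_)
  rw [norm_mul, norm_pow]
  have h1 : (1:ℝ) ≤ max 1 ‖w‖ := le_max_left _ _
  have h2 : ‖w‖ ^ i ≤ max 1 ‖w‖ ^ d :=
    (pow_le_pow_left₀ (norm_nonneg _) (le_max_right _ _) i).trans
      (pow_le_pow_right₀ h1 (Finset.mem_range_succ_iff.mp hi))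
  exact mul_le_mul_of_nonneg_left h2 (norm_nonneg _)

/-- Lower bound for polynomial evaluation for `‖x‖ ≥ 1`. -/
lemma norm_eval_ge (p : ℂ[X]) (x : ℂ) (hx : 1 ≤ ‖x‖) :
    ‖p.leadingCoeff‖ * ‖x‖ ^ p.natDegree
      - (∑ i ∈ Finset.range p.natDegree, ‖p.coeff i‖) * ‖x‖ ^ (p.natDegree - 1)
      ≤ ‖p.eval x‖ := by
  have hsplit : p.eval x = p.coeff p.natDegree * x ^ p.natDegree
      + ∑ i ∈ Finset.range p.natDegree, p.coeff i * x ^ i := by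
    rw [eval_eq_sum_range' (Nat.lt_succ_self _) x, Finset.sum_range_succ]; ring
  have hB : ‖∑ i ∈ Finset.range p.natDegree, p.coeff i * x ^ i‖
      ≤ (∑ i ∈ Finset.range p.natDegree, ‖p.coeff i‖) * ‖x‖ ^ (p.natDegree - 1) := by
    rw [Finset.sum_mul]
    refine (norm_sum_le _ _).trans (Finset.sum_le_sum fun i hi => ?_)
    rw [norm_mul, norm_pow]
    exact mul_le_mul_of_nonneg_left
      (pow_le_pow_right₀ hx (Nat.le_pred_of_lt (Finset.mem_range.mp hi))) (norm_nonneg _)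
  have h1 : ‖p.coeff p.natDegree * x ^ p.natDegree‖
      = ‖p.leadingCoeff‖ * ‖x‖ ^ p.natDegree := by
    rw [norm_mul, norm_pow]; rfl
  have h2 : ‖p.coeff p.natDegree * x ^ p.natDegree‖
      ≤ ‖p.eval x‖ + ‖∑ i ∈ Finset.range p.natDegree, p.coeff i * x ^ i‖ := by
    have : p.coeff p.natDegree * x ^ p.natDegree
        = p.eval x - ∑ i ∈ Finset.range p.natDegree, p.coeff i * x ^ i := by
      rw [hsplit]; ring
    rw [this]
    exact norm_sub_le _ _
  linarith

/-- conjugated polynomial -/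
def gb (g : ℂ[X]) : ℂ[X] := g.map (starRingEnd ℂ)

lemma gb_eval_conj (g : ℂ[X]) (z : ℂ) :
    (gb g).eval ((starRingEnd ℂ) z) = (starRingEnd ℂ) (g.eval z) := by
  rw [gb, eval_map]
  exact eval₂_at_apply (starRingEnd ℂ) z

lemma gb_coeff (g : ℂ[X]) (i : ℕ) : (gb g).coeff i = (starRingEnd ℂ) (g.coeff i) := by
  simp [gb, coeff_map]

lemma gb_natDegree (g : ℂ[X]) : (gb g).natDegree = g.natDegree :=
  natDegree_map_eq_of_injective (RingHom.injective _) g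

lemma gb_norm_coeff (g : ℂ[X]) (i : ℕ) : ‖(gb g).coeff i‖ = ‖g.coeff i‖ := by
  rw [gb_coeff]; exact RCLike.norm_conj _

/-- The two one-variable polynomials obtained by specializing `z := z₀`. -/
def pz (h g : ℂ[X]) (z₀ : ℂ) : ℂ[X] := gb g + Polynomial.C (h.eval z₀)
def qz (h g : ℂ[X]) (z₀ : ℂ) : ℂ[X] := gb h + Polynomial.C (g.eval z₀)

/-- halving lemma: for `‖x‖` large, `‖p(x)‖ ≥ (L/2)‖x‖^n`. -/
lemma halving (p : ℂ[X]) (n : ℕ) (hpn : p.natDegree = n) (hn1 : 1 ≤ n) (x : ℂ)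
    (hx1 : 1 ≤ ‖x‖) (L Ch : ℝ) (hL : ‖p.leadingCoeff‖ = L)
    (hCh : ∑ i ∈ Finset.range n, ‖p.coeff i‖ = Ch)
    (hLpos : 0 < L) (hxc : 2 * Ch / L ≤ ‖x‖) :
    L / 2 * ‖x‖ ^ n ≤ ‖p.eval x‖ := by
  have hlow := norm_eval_ge p x hx1
  rw [hpn, hL, hCh] at hlow
  have hxpos : (0:ℝ) < ‖x‖ := lt_of_lt_of_le one_pos hx1
  have hsplit : ‖x‖ ^ n = ‖x‖ ^ (n-1) * ‖x‖ := by
    rw [← pow_succ]; congr 1; omega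
  have hYpos : (0:ℝ) < ‖x‖ ^ (n-1) := pow_pos hxpos _
  have h2Ch : 2 * Ch ≤ ‖x‖ * L := by
    rw [div_le_iff₀ hLpos] at hxc; linarith
  rw [hsplit] at hlow ⊢
  nlinarith [mul_le_mul_of_nonneg_left h2Ch hYpos.le]

/-- There is a point z₀ where pz and qz have no common root. -/
lemma exists_good (h g : ℂ[X]) (n m : ℕ) (hn : h.natDegree = n) (hm : g.natDegree = m)
    (h1m : 1 ≤ m) (hmn : m < n) :
    ∃ z₀ : ℂ, ∀ w : ℂ, ¬((pz h g z₀).eval w = 0 ∧ (qz h g z₀).eval w = 0) := by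
  have hg0 : g ≠ 0 := fun h0 => by rw [h0, natDegree_zero] at hm; omega
  have hh0 : h ≠ 0 := fun h0 => by rw [h0, natDegree_zero] at hn; omega
  have hn1 : 1 ≤ n := by omega
  set L : ℝ := ‖h.leadingCoeff‖ with hLdef
  have hLpos : 0 < L := by
    rw [hLdef, norm_pos_iff]
    exact leadingCoeff_ne_zero.mpr hh0
  set Ch : ℝ := ∑ i ∈ Finset.range n, ‖h.coeff i‖ with hChdef
  set Cg : ℝ := ∑ i ∈ Finset.range (m+1), ‖g.coeff i‖ with hCgdef
  have hChnn : 0 ≤ Ch := Finset.sum_nonneg fun _ _ => norm_nonneg _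
  have hCgpos : 0 < Cg := by
    have h1 : ‖g.coeff m‖ ≤ Cg :=
      Finset.single_le_sum (f := fun i => ‖g.coeff i‖) (fun i _ => norm_nonneg _)
        (Finset.self_mem_range_succ m)
    have h2 : g.coeff m ≠ 0 := by rw [← hm]; exact leadingCoeff_ne_zero.mpr hg0
    have h3 : 0 < ‖g.coeff m‖ := norm_pos_iff.mpr h2
    linarith
  set W₀ : ℝ := max 1 (2 * Ch / L) with hW₀def
  have hW₀1 : (1:ℝ) ≤ W₀ := le_max_left _ _
  have hW₀0 : (0:ℝ) ≤ W₀ := le_trans zero_le_one hW₀1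
  have hq : (0:ℝ) ≤ 2 * Cg / L := div_nonneg (by linarith) hLpos.le
  set K : ℝ := (2 * Cg / L) ^ (m + n) with hKdef
  have hKnn : 0 ≤ K := by rw [hKdef]; exact pow_nonneg hq _
  have haux : 0 ≤ (2 * Cg / L) * W₀ ^ m := mul_nonneg hq (pow_nonneg hW₀0 m)
  have haux2 : 0 ≤ 2 * Ch / L := div_nonneg (by linarith) hLpos.le
  set t : ℝ := 1 + 2 * Ch / L + (2 * Cg / L) * W₀ ^ m + K with htdef
  have ht1 : (1:ℝ) ≤ t := by rw [htdef]; linarith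
  have htpos : (0:ℝ) < t := lt_of_lt_of_le one_pos ht1
  refine ⟨(t : ℂ), ?_⟩
  rintro w ⟨hw1, hw2⟩
  have hzt : ‖((t:ℝ) : ℂ)‖ = t := by
    rw [Complex.norm_real]; exact abs_of_pos htpos
  have hL2 : (0:ℝ) < L / 2 := by linarith
  -- the two norm equalities
  have hw1' : (gb g).eval w = -(h.eval ((t:ℝ):ℂ)) := by
    have h1 := hw1
    rw [pz, eval_add, eval_C] at h1
    linear_combination h1
  have hw2' : (gb h).eval w = -(g.eval ((t:ℝ):ℂ)) := by
    have h1 := hw2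
    rw [qz, eval_add, eval_C] at h1
    linear_combination h1
  have e1 : ‖(gb g).eval w‖ = ‖h.eval ((t:ℝ):ℂ)‖ := by rw [hw1', norm_neg]
  have e2 : ‖(gb h).eval w‖ = ‖g.eval ((t:ℝ):ℂ)‖ := by rw [hw2', norm_neg]
  -- lower bound for ‖h(t)‖
  have hht : L / 2 * t ^ n ≤ ‖h.eval ((t:ℝ):ℂ)‖ := by
    have hb := halving h n hn hn1 ((t:ℝ):ℂ) (by rw [hzt]; exact ht1) L Ch
      hLdef.symm hChdef.symm hLpos (by rw [hzt, htdef]; linarith)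
    rwa [hzt] at hb
  -- upper bounds
  have hgt : ‖g.eval ((t:ℝ):ℂ)‖ ≤ Cg * t ^ m := by
    have hb := norm_eval_le g m (le_of_eq hm) ((t:ℝ):ℂ)
    rw [hzt, max_eq_right ht1, ← hCgdef] at hb
    exact hb
  have hgbW : ‖(gb g).eval w‖ ≤ Cg * max 1 ‖w‖ ^ m := by
    have hb := norm_eval_le (gb g) m (by rw [gb_natDegree, hm]) w
    have hsame : ∑ i ∈ Finset.range (m+1), ‖(gb g).coeff i‖ = Cg := by
      rw [hCgdef]; exact Finset.sum_congr rfl fun i _ => gb_norm_coeff g i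
    rwa [hsame] at hb
  have step1 : L / 2 * t ^ n ≤ Cg * max 1 ‖w‖ ^ m := by
    calc L/2*t^n ≤ ‖h.eval ((t:ℝ):ℂ)‖ := hht
      _ = ‖(gb g).eval w‖ := e1.symm
      _ ≤ _ := hgbW
  have htK : K < t := by rw [htdef]; linarith
  have htn : t ≤ t ^ n := le_self_pow₀ ht1 (by omega)
  have step2 : W₀ < max 1 ‖w‖ := by
    by_contra hle
    push_neg at hle
    have hmaxnn : (0:ℝ) ≤ max 1 ‖w‖ := le_trans zero_le_one (le_max_left _ _)
    have hpow : max 1 ‖w‖ ^ m ≤ W₀ ^ m := pow_le_pow_left₀ hmaxnn hle m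
    have h1 : L / 2 * t ^ n ≤ Cg * W₀ ^ m :=
      step1.trans (mul_le_mul_of_nonneg_left hpow hCgpos.le)
    have ht2 : 2 * Cg / L * W₀ ^ m < t := by rw [htdef]; linarith
    have h3 := mul_lt_mul_of_pos_left ht2 hL2
    have h4 : L / 2 * (2 * Cg / L * W₀ ^ m) = Cg * W₀ ^ m := by
      field_simp
    rw [h4] at h3
    have h5 : L / 2 * t ≤ L / 2 * t ^ n := mul_le_mul_of_nonneg_left htn hL2.le
    linarith
  have hmax : max 1 ‖w‖ = ‖w‖ := by
    rcases le_or_gt ‖w‖ 1 with hc | hc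
    · exfalso; rw [max_eq_left hc] at step2; linarith
    · exact max_eq_right hc.le
  have hw_1 : 1 ≤ ‖w‖ := by rw [← hmax]; exact le_max_left _ _
  have hwW : W₀ < ‖w‖ := hmax ▸ step2
  have hwCh : 2 * Ch / L ≤ ‖w‖ := le_trans (le_max_right 1 _) hwW.le
  -- lower bound on ‖(gb h)(w)‖
  have hgbh_lc : ‖(gb h).leadingCoeff‖ = L := by
    rw [hLdef, leadingCoeff, leadingCoeff, gb_natDegree, gb_norm_coeff]
  have hgbh_sum : ∑ i ∈ Finset.range n, ‖(gb h).coeff i‖ = Ch := by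
    rw [hChdef]; exact Finset.sum_congr rfl fun i _ => gb_norm_coeff h i
  have hhbw : L / 2 * ‖w‖ ^ n ≤ ‖(gb h).eval w‖ :=
    halving (gb h) n (by rw [gb_natDegree, hn]) hn1 w hw_1 L Ch hgbh_lc hgbh_sum hLpos hwCh
  have step3 : L / 2 * ‖w‖ ^ n ≤ Cg * t ^ m := by
    calc L/2*‖w‖^n ≤ ‖(gb h).eval w‖ := hhbw
      _ = ‖g.eval ((t:ℝ):ℂ)‖ := e2
      _ ≤ Cg * t ^ m := hgt
  have step1' : L / 2 * t ^ n ≤ Cg * ‖w‖ ^ m := by rw [hmax] at step1; exact step1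
  -- raise to powers
  have hwnn : (0:ℝ) ≤ ‖w‖ := norm_nonneg _
  have P1 : (L/2 * t^n)^n ≤ (Cg * ‖w‖^m)^n :=
    pow_le_pow_left₀ (mul_nonneg hL2.le (pow_nonneg htpos.le n)) step1' n
  have P3 : (L/2 * ‖w‖^n)^m ≤ (Cg * t^m)^m :=
    pow_le_pow_left₀ (mul_nonneg hL2.le (pow_nonneg hwnn n)) step3 m
  rw [mul_pow, mul_pow, ← pow_mul, ← pow_mul] at P1
  rw [mul_pow, mul_pow, ← pow_mul, ← pow_mul] at P3
  have comb : (L/2)^(m+n) * t^(n*n) ≤ Cg^(m+n) * t^(m*m) := by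
    have A1 : (L/2)^m * ((L/2)^n * t^(n*n)) ≤ (L/2)^m * (Cg^n * ‖w‖^(m*n)) :=
      mul_le_mul_of_nonneg_left P1 (pow_nonneg hL2.le m)
    have A2 : Cg^n * ((L/2)^m * ‖w‖^(n*m)) ≤ Cg^n * (Cg^m * t^(m*m)) :=
      mul_le_mul_of_nonneg_left P3 (pow_nonneg hCgpos.le n)
    calc (L/2)^(m+n) * t^(n*n) = (L/2)^m * ((L/2)^n * t^(n*n)) := by rw [pow_add]; ring
      _ ≤ (L/2)^m * (Cg^n * ‖w‖^(m*n)) := A1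
      _ = Cg^n * ((L/2)^m * ‖w‖^(n*m)) := by rw [Nat.mul_comm m n]; ring
      _ ≤ Cg^n * (Cg^m * t^(m*m)) := A2
      _ = Cg^(m+n) * t^(m*m) := by rw [pow_add]; ring
  have hmmnn : m*m < n*n := by nlinarith
  have hsplit2 : t^(n*n) = t^(m*m) * t^(n*n - m*m) := by
    rw [← pow_add]; congr 1; omega
  have htposm : (0:ℝ) < t^(m*m) := pow_pos htpos _
  have h6 : ((L/2)^(m+n) * t^(n*n-m*m)) * t^(m*m) ≤ Cg^(m+n) * t^(m*m) := by
    calc ((L/2)^(m+n) * t^(n*n-m*m)) * t^(m*m)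
        = (L/2)^(m+n) * (t^(m*m) * t^(n*n-m*m)) := by ring
      _ = (L/2)^(m+n) * t^(n*n) := by rw [← hsplit2]
      _ ≤ Cg^(m+n) * t^(m*m) := comb
  have final1 : (L/2)^(m+n) * t^(n*n - m*m) ≤ Cg^(m+n) :=
    le_of_mul_le_mul_right h6 htposm
  have hte : t ≤ t^(n*n - m*m) := le_self_pow₀ ht1 (by omega)
  have final2 : (L/2)^(m+n) * t ≤ Cg^(m+n) :=
    le_trans (mul_le_mul_of_nonneg_left hte (pow_nonneg hL2.le _)) final1
  have hKeq : (L/2)^(m+n) * K = Cg^(m+n) := by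
    rw [hKdef, ← mul_pow]
    congr 1
    field_simp
  have final3 : (L/2)^(m+n) * K < (L/2)^(m+n) * t :=
    mul_lt_mul_of_pos_left htK (pow_pos hL2 _)
  rw [hKeq] at final3
  linarith

/-- Sylvester-style matrix. -/
def pw {n m : ℕ} (c : Fin n ⊕ Fin m) : ℕ := Sum.elim (fun i : Fin n => (i:ℕ)) (fun j : Fin m => n + (j:ℕ)) c

lemma pw_eq {n m : ℕ} (c : Fin n ⊕ Fin m) : pw c = ((finSumFinEquiv c : Fin (n+m)) : ℕ) := by
  rcases c with i | j <;> simp [pw]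

lemma pw_lt {n m : ℕ} (c : Fin n ⊕ Fin m) : pw c < n + m := by
  rw [pw_eq]; exact (finSumFinEquiv c).isLt

lemma pw_inj {n m : ℕ} : Function.Injective (pw (n := n) (m := m)) := by
  intro a b hab
  rw [pw_eq, pw_eq] at hab
  exact finSumFinEquiv.injective (Fin.val_injective hab)

def bs {n m : ℕ} (r : Fin n ⊕ Fin m) : ℕ :=
  Sum.elim (fun i : Fin n => (i:ℕ)) (fun j : Fin m => (j:ℕ)) r

lemma bs_lt {n m : ℕ} (hmn : m ≤ n) (r : Fin n ⊕ Fin m) : bs r < n := by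
  rcases r with i | j
  · exact i.isLt
  · exact lt_of_lt_of_le j.isLt hmn

def PP (h g : ℂ[X]) : Polynomial (Polynomial ℂ) :=
  ((gb g).map Polynomial.C) + Polynomial.C h
def QQ (h g : ℂ[X]) : Polynomial (Polynomial ℂ) :=
  ((gb h).map Polynomial.C) + Polynomial.C g

def rowp (h g : ℂ[X]) (n m : ℕ) : Fin n ⊕ Fin m → Polynomial (Polynomial ℂ) :=
  Sum.elim (fun i => PP h g * X ^ (i:ℕ)) (fun j => QQ h g * X ^ (j:ℕ))

def SylM (h g : ℂ[X]) (n m : ℕ) : Matrix (Fin n ⊕ Fin m) (Fin n ⊕ Fin m) (Polynomial ℂ) :=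
  fun r c => (rowp h g n m r).coeff (pw c)

def Rres (h g : ℂ[X]) (n m : ℕ) : Polynomial ℂ := (SylM h g n m).det

lemma PP_coeff_zero (h g : ℂ[X]) : (PP h g).coeff 0 = Polynomial.C ((gb g).coeff 0) + h := by
  simp [PP, coeff_map, coeff_C]

lemma PP_coeff_pos (h g : ℂ[X]) (k : ℕ) (hk : k ≠ 0) :
    (PP h g).coeff k = Polynomial.C ((gb g).coeff k) := by
  simp [PP, coeff_map, coeff_C, hk]

lemma QQ_coeff_zero (h g : ℂ[X]) : (QQ h g).coeff 0 = Polynomial.C ((gb h).coeff 0) + g := by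
  simp [QQ, coeff_map, coeff_C]

lemma QQ_coeff_pos (h g : ℂ[X]) (k : ℕ) (hk : k ≠ 0) :
    (QQ h g).coeff k = Polynomial.C ((gb h).coeff k) := by
  simp [QQ, coeff_map, coeff_C, hk]

lemma entry_natDegree_le (h g : ℂ[X]) (n m : ℕ) (hn : h.natDegree = n) (hm : g.natDegree = m)
    (hmn : m ≤ n) (r c : Fin n ⊕ Fin m) :
    (SylM h g n m r c).natDegree ≤ if pw c = bs r then n else 0 := by
  rcases r with i | j
  · simp only [SylM, rowp, Sum.elim_inl, bs]
    rw [coeff_mul_X_pow']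
    by_cases hle : (i:ℕ) ≤ pw c
    · rw [if_pos hle]
      by_cases heq : pw c = (i:ℕ)
      · show _ ≤ (if pw c = (i:ℕ) then n else 0)
        rw [if_pos heq, heq, Nat.sub_self, PP_coeff_zero]
        refine (natDegree_add_le _ _).trans ?_
        simp [hn]
      · show _ ≤ (if pw c = (i:ℕ) then n else 0)
        rw [if_neg heq, PP_coeff_pos _ _ _ (by omega)]
        simp
    · rw [if_neg hle]
      have : ¬ (pw c = (i:ℕ)) := by omega
      simp [this]
  · simp only [SylM, rowp, Sum.elim_inr, bs]
    rw [coeff_mul_X_pow']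
    by_cases hle : (j:ℕ) ≤ pw c
    · rw [if_pos hle]
      by_cases heq : pw c = (j:ℕ)
      · show _ ≤ (if pw c = (j:ℕ) then n else 0)
        rw [if_pos heq, heq, Nat.sub_self, QQ_coeff_zero]
        refine (natDegree_add_le _ _).trans ?_
        simp [hm, hmn]
      · show _ ≤ (if pw c = (j:ℕ) then n else 0)
        rw [if_neg heq, QQ_coeff_pos _ _ _ (by omega)]
        simp
    · rw [if_neg hle]
      have : ¬ (pw c = (j:ℕ)) := by omega
      simp [this]

/-- specialized row polynomials -/
def rowsp (h g : ℂ[X]) (n m : ℕ) (z₀ : ℂ) : Fin n ⊕ Fin m → ℂ[X] :=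
  Sum.elim (fun i => pz h g z₀ * X ^ (i:ℕ)) (fun j => qz h g z₀ * X ^ (j:ℕ))

lemma SylM_map (h g : ℂ[X]) (n m : ℕ) (z₀ : ℂ) :
    (SylM h g n m).map (Polynomial.eval z₀)
      = fun r c => (rowsp h g n m z₀ r).coeff (pw c) := by
  funext r c
  have hcomp : (evalRingHom z₀).comp (Polynomial.C) = RingHom.id ℂ := by
    ext x; simp
  have hrow : (rowp h g n m r).map (evalRingHom z₀) = rowsp h g n m z₀ r := by
    rcases r with i | j <;>
      simp [rowp, rowsp, PP, QQ, pz, qz, Polynomial.map_add, Polynomial.map_mul,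
        Polynomial.map_pow, Polynomial.map_map, hcomp, Polynomial.map_C]
  have hc : Polynomial.eval z₀ ((rowp h g n m r).coeff (pw c))
      = ((rowp h g n m r).map (evalRingHom z₀)).coeff (pw c) := by
    rw [coeff_map]; rfl
  simp only [Matrix.map_apply, SylM]
  rw [hc, hrow]

lemma Rres_eval (h g : ℂ[X]) (n m : ℕ) (z₀ : ℂ) :
    (Rres h g n m).eval z₀ = ((SylM h g n m).map (Polynomial.eval z₀)).det := by
  have := RingHom.map_det (evalRingHom z₀) (SylM h g n m)
  simpa [Rres, RingHom.mapMatrix_apply] using this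

lemma key_sum (s : ℂ[X]) (n m : ℕ) (hs : s.natDegree < n + m) (w : ℂ) :
    ∑ c : Fin n ⊕ Fin m, s.coeff (pw c) * w ^ (pw c) = s.eval w := by
  have h1 : ∑ c : Fin n ⊕ Fin m, s.coeff (pw c) * w ^ (pw c)
      = ∑ k : Fin (n+m), s.coeff (k:ℕ) * w ^ (k:ℕ) := by
    rw [← Equiv.sum_comp finSumFinEquiv (fun k : Fin (n+m) => s.coeff (k:ℕ) * w ^ (k:ℕ))]
    exact Finset.sum_congr rfl fun c _ => by rw [pw_eq]
  rw [h1, Fin.sum_univ_eq_sum_range (fun i => s.coeff i * w ^ i) (n+m),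
    ← eval_eq_sum_range' hs w]

lemma rowsp_natDegree_lt (h g : ℂ[X]) (n m : ℕ) (hn : h.natDegree = n) (hm : g.natDegree = m)
    (hm1 : 1 ≤ m) (hmn : m < n) (z₀ : ℂ) (r : Fin n ⊕ Fin m) :
    (rowsp h g n m z₀ r).natDegree < n + m := by
  have hpz : (pz h g z₀).natDegree ≤ m := by
    refine (natDegree_add_le _ _).trans ?_
    simp [gb_natDegree, hm]
  have hqz : (qz h g z₀).natDegree ≤ n := by
    refine (natDegree_add_le _ _).trans ?_
    simp [gb_natDegree, hn]
  rcases r with i | j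
  · have := natDegree_mul_le (p := pz h g z₀) (q := X ^ (i:ℕ))
    have hX : (X ^ (i:ℕ) : ℂ[X]).natDegree ≤ (i:ℕ) := natDegree_X_pow_le _
    have hi := i.isLt
    simp only [rowsp, Sum.elim_inl]
    omega
  · have := natDegree_mul_le (p := qz h g z₀) (q := X ^ (j:ℕ))
    have hX : (X ^ (j:ℕ) : ℂ[X]).natDegree ≤ (j:ℕ) := natDegree_X_pow_le _
    have hj := j.isLt
    simp only [rowsp, Sum.elim_inr]
    omega

/-- zero of the harmonic polynomial kills the resultant -/
lemma Rres_eval_zero (h g : ℂ[X]) (n m : ℕ) (hn : h.natDegree = n) (hm : g.natDegree = m)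
    (hm1 : 1 ≤ m) (hmn : m < n) (z : ℂ)
    (hz : h.eval z + (starRingEnd ℂ) (g.eval z) = 0) :
    (Rres h g n m).eval z = 0 := by
  set w := (starRingEnd ℂ) z with hw
  have hpzw : (pz h g z).eval w = 0 := by
    rw [pz, eval_add, eval_C, hw, gb_eval_conj]
    linear_combination hz
  have hqzw : (qz h g z).eval w = 0 := by
    rw [qz, eval_add, eval_C, hw, gb_eval_conj]
    have := congrArg (starRingEnd ℂ) hz
    simp only [map_add, RingHom.map_zero, RingHomCompTriple.comp_apply,
      Complex.conj_conj, RingHom.id_apply] at this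
    linear_combination this
  rw [Rres_eval]
  rw [← Matrix.exists_mulVec_eq_zero_iff]
  refine ⟨fun c => w ^ pw c, ?_, ?_⟩
  · intro h0
    have h1 := congrFun h0 (Sum.inl (⟨0, by omega⟩ : Fin n))
    simp [pw] at h1
  · funext r
    have hent : ∀ c, ((SylM h g n m).map (Polynomial.eval z)) r c
        = (rowsp h g n m z r).coeff (pw c) := fun c => by
      rw [SylM_map]
    simp only [Matrix.mulVec, dotProduct]
    rw [Finset.sum_congr rfl (fun c _ => by rw [hent c])]
    rw [key_sum _ n m (rowsp_natDegree_lt h g n m hn hm hm1 hmn z r) w]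
    rcases r with i | j
    · simp [rowsp, hpzw]
    · simp [rowsp, hqzw]

lemma coprime_of_no_common_root (p q : ℂ[X]) (hp : p ≠ 0)
    (hno : ∀ w, ¬(p.eval w = 0 ∧ q.eval w = 0)) : IsCoprime p q := by
  rw [← EuclideanDomain.gcd_isUnit_iff]
  by_contra hu
  have hd0 : EuclideanDomain.gcd p q ≠ 0 := fun h0 =>
    hp (EuclideanDomain.gcd_eq_zero_iff.mp h0).1
  have hdpos : 0 < (EuclideanDomain.gcd p q).degree := by
    rcases lt_or_ge 0 (EuclideanDomain.gcd p q).degree with h1 | h1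
    · exact h1
    · exact absurd (isUnit_iff_degree_eq_zero.mpr
        (le_antisymm h1 (zero_le_degree_iff.mpr hd0))) hu
  obtain ⟨w, hw⟩ := Complex.exists_root hdpos
  refine hno w ⟨?_, ?_⟩
  · exact eval_eq_zero_of_dvd_of_eval_eq_zero (EuclideanDomain.gcd_dvd_left p q) hw
  · exact eval_eq_zero_of_dvd_of_eval_eq_zero (EuclideanDomain.gcd_dvd_right p q) hw

/-- at a good point the resultant is nonzero -/
lemma Rres_ne_zero (h g : ℂ[X]) (n m : ℕ) (hn : h.natDegree = n) (hm : g.natDegree = m)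
    (hm1 : 1 ≤ m) (hmn : m < n) :
    Rres h g n m ≠ 0 := by
  obtain ⟨z₀, hz₀⟩ := exists_good h g n m hn hm hm1 hmn
  have hpz_deg : (pz h g z₀).natDegree = m := by
    rw [pz, natDegree_add_C, gb_natDegree, hm]
  have hqz_deg : (qz h g z₀).natDegree = n := by
    rw [qz, natDegree_add_C, gb_natDegree, hn]
  have hpz0 : pz h g z₀ ≠ 0 := fun h0 => by
    rw [h0, natDegree_zero] at hpz_deg; omega
  have hcop : IsCoprime (pz h g z₀) (qz h g z₀) :=
    coprime_of_no_common_root _ _ hpz0 hz₀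
  intro hR0
  have hdet0 : ((SylM h g n m).map (Polynomial.eval z₀)).det = 0 := by
    rw [← Rres_eval, hR0, eval_zero]
  obtain ⟨v, hv0, hvM⟩ := Matrix.exists_vecMul_eq_zero_iff.mpr hdet0
  set a : ℂ[X] := ∑ i : Fin n, Polynomial.C (v (Sum.inl i)) * X ^ (i:ℕ) with ha
  set b : ℂ[X] := ∑ j : Fin m, Polynomial.C (v (Sum.inr j)) * X ^ (j:ℕ) with hb
  have ha_deg : a.natDegree ≤ n - 1 := by
    refine natDegree_sum_le_of_forall_le _ _ fun i _ => ?_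
    exact (natDegree_C_mul_X_pow_le _ _).trans (by have := i.isLt; omega)
  have hb_deg : b.natDegree ≤ m - 1 := by
    refine natDegree_sum_le_of_forall_le _ _ fun j _ => ?_
    exact (natDegree_C_mul_X_pow_le _ _).trans (by have := j.isLt; omega)
  set G : ℂ[X] := a * pz h g z₀ + b * qz h g z₀ with hG
  have hsum : G = ∑ r : Fin n ⊕ Fin m, Polynomial.C (v r) * rowsp h g n m z₀ r := by
    rw [Fintype.sum_sum_type]
    simp only [rowsp, Sum.elim_inl, Sum.elim_inr]
    rw [hG, ha, hb, Finset.sum_mul, Finset.sum_mul]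
    refine congrArg₂ (· + ·) ?_ ?_
    · exact Finset.sum_congr rfl fun i _ => by ring
    · exact Finset.sum_congr rfl fun j _ => by ring
  have hGc : ∀ c : Fin n ⊕ Fin m, G.coeff (pw c) = 0 := by
    intro c
    have hvc := congrFun hvM c
    simp only [Matrix.vecMul, dotProduct, Pi.zero_apply] at hvc
    rw [hsum, finset_sum_coeff]
    rw [← hvc]
    refine Finset.sum_congr rfl fun r _ => ?_
    rw [coeff_C_mul, SylM_map]
  have hG0 : G = 0 := by
    ext k
    rw [coeff_zero]
    by_cases hk : k < n + m
    · have hc : pw (finSumFinEquiv.symm (⟨k, hk⟩ : Fin (n+m))) = k := by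
        rw [pw_eq, Equiv.apply_symm_apply]
      rw [← hc]
      exact hGc _
    · refine coeff_eq_zero_of_natDegree_lt ?_
      have h1 : (a * pz h g z₀).natDegree ≤ a.natDegree + (pz h g z₀).natDegree :=
        natDegree_mul_le
      have h2 : (b * qz h g z₀).natDegree ≤ b.natDegree + (qz h g z₀).natDegree :=
        natDegree_mul_le
      have h3 := natDegree_add_le (a * pz h g z₀) (b * qz h g z₀)
      rw [← hG] at h3
      omega
  have hdvd : pz h g z₀ ∣ b * qz h g z₀ := by
    refine ⟨-a, ?_⟩
    have hG0' : a * pz h g z₀ + b * qz h g z₀ = 0 := by rw [← hG, hG0]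
    linear_combination hG0'
  have hdvd_b : pz h g z₀ ∣ b := hcop.dvd_of_dvd_mul_right hdvd
  have hb0 : b = 0 := by
    by_contra hbne
    have := natDegree_le_of_dvd hdvd_b hbne
    omega
  have ha0 : a = 0 := by
    have hG0' : a * pz h g z₀ + b * qz h g z₀ = 0 := by rw [← hG, hG0]
    rw [hb0, zero_mul, add_zero] at hG0'
    rcases mul_eq_zero.mp hG0' with h1 | h1
    · exact h1
    · exact absurd h1 hpz0
  apply hv0
  funext r
  rcases r with i | j
  · have : a.coeff (i:ℕ) = v (Sum.inl i) := by
      rw [ha, finset_sum_coeff]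
      have : ∀ i' : Fin n,
          (Polynomial.C (v (Sum.inl i')) * X ^ (i':ℕ)).coeff (i:ℕ)
          = if i' = i then v (Sum.inl i') else 0 := by
        intro i'
        rw [coeff_C_mul, coeff_X_pow]
        by_cases hii : i' = i
        · simp [hii]
        · have : ¬((i:ℕ) = (i':ℕ)) := fun hv => hii (Fin.val_injective hv.symm)
          simp [hii, this]
      rw [Finset.sum_congr rfl fun i' _ => this i']
      simp
    rw [Pi.zero_apply, ← this, ha0, coeff_zero]
  · have : b.coeff (j:ℕ) = v (Sum.inr j) := by
      rw [hb, finset_sum_coeff]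
      have : ∀ j' : Fin m,
          (Polynomial.C (v (Sum.inr j')) * X ^ (j':ℕ)).coeff (j:ℕ)
          = if j' = j then v (Sum.inr j') else 0 := by
        intro j'
        rw [coeff_C_mul, coeff_X_pow]
        by_cases hjj : j' = j
        · simp [hjj]
        · have : ¬((j:ℕ) = (j':ℕ)) := fun hv => hjj (Fin.val_injective hv.symm)
          simp [hjj, this]
      rw [Finset.sum_congr rfl fun j' _ => this j']
      simp
    rw [Pi.zero_apply, ← this, hb0, coeff_zero]

/-- degree bound -/
lemma Rres_natDegree_le (h g : ℂ[X]) (n m : ℕ) (hn : h.natDegree = n) (hm : g.natDegree = m)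
    (hm1 : 1 ≤ m) (hmn : m < n) :
    (Rres h g n m).natDegree ≤ n ^ 2 := by
  have hmn' : m ≤ n := le_of_lt hmn
  rw [Rres, Matrix.det_apply']
  refine natDegree_sum_le_of_forall_le _ _ fun σ _ => ?_
  refine (natDegree_mul_le).trans ?_
  rw [show ((Equiv.Perm.sign σ : ℤ) : ℂ[X]).natDegree = 0 from natDegree_intCast _, zero_add]
  refine (natDegree_prod_le _ _).trans ?_
  calc ∑ r : Fin n ⊕ Fin m, (SylM h g n m (σ r) r).natDegree
      ≤ ∑ r : Fin n ⊕ Fin m, (if pw r = bs (σ r) then n else 0) :=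
        Finset.sum_le_sum fun r _ => entry_natDegree_le h g n m hn hm hmn' (σ r) r
    _ = ∑ _r ∈ Finset.univ.filter (fun r : Fin n ⊕ Fin m => pw r = bs (σ r)), n :=
        (Finset.sum_filter _ _).symm
    _ = (Finset.univ.filter (fun r : Fin n ⊕ Fin m => pw r = bs (σ r))).card * n := by
        rw [Finset.sum_const, smul_eq_mul]
    _ ≤ n * n := by
        refine Nat.mul_le_mul_right n ?_
        have hcard := Finset.card_le_card_of_injOn
          (s := Finset.univ.filter (fun r : Fin n ⊕ Fin m => pw r = bs (σ r)))
          (t := Finset.range n) (fun r : Fin n ⊕ Fin m => pw r)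
          (fun r hr => by
            simp only [Finset.mem_coe, Finset.mem_filter] at hr
            simp only [Finset.mem_coe, Finset.mem_range]
            exact hr.2 ▸ bs_lt hmn' (σ r))
          (fun a _ b _ hab => pw_inj hab)
        simpa using hcard
    _ = n ^ 2 := (sq n).symm

/-- counting lemma -/
lemma card_of_subset_roots (R : ℂ[X]) (hR : R ≠ 0) (S : Set ℂ)
    (hS : ∀ z ∈ S, R.eval z = 0) (d : ℕ) (hd : R.natDegree ≤ d) :
    S.Finite ∧ S.ncard ≤ d := by
  have hsub : S ⊆ ↑R.roots.toFinset := by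
    intro z hz
    simp only [Finset.coe_sort_coe, Multiset.mem_toFinset, Finset.mem_coe]
    rw [mem_roots hR]
    exact hS z hz
  refine ⟨Set.Finite.subset (R.roots.toFinset).finite_toSet hsub, ?_⟩
  calc S.ncard ≤ (↑R.roots.toFinset : Set ℂ).ncard :=
        Set.ncard_le_ncard hsub (R.roots.toFinset).finite_toSet
    _ = R.roots.toFinset.card := Set.ncard_coe_finset _
    _ ≤ Multiset.card R.roots := Multiset.toFinset_card_le _
    _ ≤ R.natDegree := card_roots' R
    _ ≤ d := hd

end Wilm

end

open Wilm in
/-- Wilmshurst: a harmonic polynomial `f(z) = h(z) + conj(g(z))` with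
`deg h = n > deg g` has at most `n²` zeros. -/
theorem stmt_13 (h g : Polynomial ℂ) (n : ℕ) (hn : h.natDegree = n) (hdeg : g.degree < h.degree) :
    {z : ℂ | h.eval z + (starRingEnd ℂ) (g.eval z) = 0}.Finite ∧
    {z : ℂ | h.eval z + (starRingEnd ℂ) (g.eval z) = 0}.ncard ≤ n ^ 2 := by
  have hh0 : h ≠ 0 := by
    intro h0
    rw [h0, degree_zero] at hdeg
    exact (not_lt_bot hdeg)
  by_cases hg : 0 < g.degree
  · -- main case
    have hg0 : g ≠ 0 := fun h0 => by simp [h0] at hg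
    set m := g.natDegree with hm
    have hm1 : 1 ≤ m := natDegree_pos_iff_degree_pos.mpr hg
    have hmn : m < n := hn ▸ natDegree_lt_natDegree hg0 hdeg
    have hR0 := Rres_ne_zero h g n m hn rfl hm1 hmn
    have hRd := Rres_natDegree_le h g n m hn rfl hm1 hmn
    exact card_of_subset_roots _ hR0 _
      (fun z hz => Rres_eval_zero h g n m hn rfl hm1 hmn z hz) _ hRd
  · -- g is constant
    push_neg at hg
    have hgC : g = Polynomial.C (g.coeff 0) := eq_C_of_degree_le_zero hg
    set F : Polynomial ℂ := h + Polynomial.C ((starRingEnd ℂ) (g.coeff 0)) with hF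
    have hset : {z : ℂ | h.eval z + (starRingEnd ℂ) (g.eval z) = 0}
        = {z : ℂ | F.eval z = 0} := by
      ext z
      simp only [Set.mem_setOf_eq, hF, eval_add, eval_C]
      constructor <;> intro hz <;> rw [hgC] at * <;> simpa [eval_C] using hz
    have hkey : F ≠ 0 ∧ F.natDegree ≤ n := by
      rcases Nat.eq_zero_or_pos n with h0 | hpos
      · -- n = 0 : h has degree 0, g = 0
        have hdeg0 : h.degree = 0 := by
          rw [degree_eq_natDegree hh0, hn, h0]; rfl
        have hgbot : g = 0 := by
          have h2 : g.degree < 0 := hdeg0 ▸ hdeg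
          exact degree_eq_bot.mp (Nat.WithBot.lt_zero_iff.mp h2)
        have hFh : F = h := by rw [hF, hgbot]; simp
        exact ⟨hFh ▸ hh0, by rw [hFh, hn]⟩
      · have hFn : F.natDegree = n := by rw [hF, natDegree_add_C, hn]
        refine ⟨fun h0 => ?_, le_of_eq hFn⟩
        rw [h0, natDegree_zero] at hFn
        omega
    have hF0 : F ≠ 0 := hkey.1
    have hFd : F.natDegree ≤ n ^ 2 := by
      calc F.natDegree ≤ n := hkey.2
        _ ≤ n ^ 2 := by nlinarith
    rw [hset]
    exact card_of_subset_roots F hF0 _ (fun z hz => hz) _ hFd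
end
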